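/- Let I be a symmetric strongly shifted ideal of K[x_1,...,x_n] and 1 ≤ c ≤ n. Then the saturation I : I_{n,c}^∞ equals the ideal generated by all σ(x^μ) with σ ∈ 𝔖_n and μ ∈ P_n such that (μ_1,...,μ_{c−1}) = (λ_1,...,λ_{c−1}) for some λ ∈ P(I); moreover this saturation is symmetric strongly shifted. -/

import Mathlib

open MvPolynomial

/-- The monomial `x^a` in `K[x_1,...,x_n]`. -/
noncomputable def mon (K : Type) [Field K] (n : ℕ) (a : Fin n → ℕ) :
    MvPolynomial (Fin n) K :=
  monomial (Finsupp.equivFunOnFinite.symm a) 1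

/-- A monomial ideal: an ideal generated by monomials. -/
def IsMonomialIdeal (K : Type) [Field K] (n : ℕ)
    (I : Ideal (MvPolynomial (Fin n) K)) : Prop :=
  ∃ S : Set (Fin n → ℕ), I = Ideal.span (mon K n '' S)

/-- A symmetric (`𝔖_n`-fixed) ideal. -/
def IsSymmetricIdeal (K : Type) [Field K] (n : ℕ)
    (I : Ideal (MvPolynomial (Fin n) K)) : Prop :=
  ∀ σ : Equiv.Perm (Fin n), Ideal.map (rename (σ : Fin n → Fin n)) I = I

/-- The exponent vector obtained from `a` by the Borel move `x^a ↦ x^a · x_i / x_j`. -/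
def borelMoveVec (n : ℕ) (a : Fin n → ℕ) (i j : Fin n) : Fin n → ℕ :=
  fun k => if k = i then a k + 1 else if k = j then a k - 1 else a k

/-- A symmetric strongly shifted ideal (sssi). -/
def IsSSSI (K : Type) [Field K] (n : ℕ)
    (I : Ideal (MvPolynomial (Fin n) K)) : Prop :=
  IsMonomialIdeal K n I ∧ IsSymmetricIdeal K n I ∧
    ∀ lam : Fin n → ℕ, Monotone lam → mon K n lam ∈ I →
      ∀ i j : Fin n, i < j → lam i < lam j →
        mon K n (borelMoveVec n lam i j) ∈ I

/-- The dominance order on partitions: `μ ⊴ λ`. -/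
def dominates (n : ℕ) (μ lam : Fin n → ℕ) : Prop :=
  ∀ k : Fin n, ∑ i ∈ Finset.Ici k, μ i ≤ ∑ i ∈ Finset.Ici k, lam i

/-- `Sss(B)`: the smallest symmetric strongly shifted ideal containing the
monomials `x^λ`, `λ ∈ B`. -/
noncomputable def Sss (K : Type) [Field K] (n : ℕ) (B : Set (Fin n → ℕ)) :
    Ideal (MvPolynomial (Fin n) K) :=
  sInf {J | IsSSSI K n J ∧ ∀ lam ∈ B, mon K n lam ∈ J}

/-- The square-free Veronese ideal `I_{n,c}`, generated by all square-free
monomials of degree `n − c + 1`. -/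
noncomputable def vero (K : Type) [Field K] (n c : ℕ) :
    Ideal (MvPolynomial (Fin n) K) :=
  Ideal.span (mon K n '' {a | (∀ i, a i ≤ 1) ∧ ∑ i, a i = n - c + 1})

/-!
Compare exponent vectors through prefix sums, the sums of their `k` smallest entries. For a
symmetric strongly shifted ideal, `x^a ∈ I` as soon as some sorted `λ ∈ P(I)` satisfies
`∑_{t ∈ S} a_t ≥ λ_1 + ⋯ + λ_{|S|}` for every set `S` of indices: Robin Hood transfers between
the ends of two value blocks of `λ` push `λ` below `a` while keeping it sorted and dominated.
Every generator of `I_{n,c}^N` has degree at least `N` on every `c`-set of variables, which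
settles the sets with `|S| ≥ c` once `N ≥ |λ|`; on smaller sets only `λ_1, …, λ_{c-1}` matter.
Conversely, multiplying a monomial of the saturation by the `N`-th power of the square-free
monomial in its `n - c + 1` largest variables lands in `I` and leaves its `c - 1` smallest
exponents unchanged.
-/

section Monomials

variable {K : Type} [Field K] {n : ℕ}

lemma mon_zero : mon K n 0 = 1 := by
  rw [mon, show Finsupp.equivFunOnFinite.symm (0 : Fin n → ℕ) = 0 from
    map_zero Finsupp.addEquivFunOnFinite.symm, monomial_zero', C_1]

lemma mon_add (a b : Fin n → ℕ) : mon K n (a + b) = mon K n a * mon K n b := by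
  rw [mon, mon, mon, monomial_mul, one_mul]
  exact congrArg (monomial · 1) (map_add Finsupp.addEquivFunOnFinite.symm a b)

lemma mon_nsmul (N : ℕ) (a : Fin n → ℕ) : mon K n (N • a) = mon K n a ^ N := by
  rw [mon, mon, monomial_pow, one_pow]
  exact congrArg (monomial · 1) (map_nsmul Finsupp.addEquivFunOnFinite.symm N a)

lemma rename_mon (σ : Equiv.Perm (Fin n)) (a : Fin n → ℕ) :
    rename σ (mon K n a) = mon K n (a ∘ σ.symm) := by
  rw [mon, mon, rename_monomial]
  congr 2
  ext i
  rw [Finsupp.mapDomain_equiv_apply]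
  rfl

lemma mem_span_mon_iff {S : Set (Fin n → ℕ)} {f : MvPolynomial (Fin n) K} :
    f ∈ Ideal.span (mon K n '' S) ↔ ∀ d ∈ f.support, ∃ s ∈ S, s ≤ ⇑d := by
  rw [show mon K n '' S = (monomial · 1) '' (Finsupp.equivFunOnFinite.symm '' S) from
    (Set.image_image (monomial · 1) _ S).symm, mem_ideal_span_monomial_image]
  simp only [Set.exists_mem_image, Finsupp.le_def, Pi.le_def]
  rfl

lemma mon_mem_span_mon_iff {S : Set (Fin n → ℕ)} {a : Fin n → ℕ} :
    mon K n a ∈ Ideal.span (mon K n '' S) ↔ ∃ s ∈ S, s ≤ a := by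
  classical
  simp [mem_span_mon_iff, mon, support_monomial]

lemma mon_mem_of_le {I : Ideal (MvPolynomial (Fin n) K)} {s a : Fin n → ℕ}
    (hs : mon K n s ∈ I) (hle : s ≤ a) : mon K n a ∈ I := by
  rw [← tsub_add_cancel_of_le hle, mon_add]
  exact I.mul_mem_left _ hs

lemma IsMonomialIdeal.mon_add_mem_of_mem_support {I : Ideal (MvPolynomial (Fin n) K)}
    (hI : IsMonomialIdeal K n I) {f : MvPolynomial (Fin n) K} {e : Fin n → ℕ}
    (hf : f * mon K n e ∈ I) {d : Fin n →₀ ℕ} (hd : d ∈ f.support) : mon K n (⇑d + e) ∈ I := by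
  obtain ⟨S, rfl⟩ := hI
  have hde : d + Finsupp.equivFunOnFinite.symm e ∈ (f * mon K n e).support := by
    rw [mem_support_iff, mon, coeff_mul_monomial, mul_one]
    exact mem_support_iff.mp hd
  obtain ⟨s, hs, hle⟩ := mem_span_mon_iff.mp hf _ hde
  exact mon_mem_span_mon_iff.mpr ⟨s, hs, by simpa using hle⟩

lemma IsSymmetricIdeal.mon_comp_mem {I : Ideal (MvPolynomial (Fin n) K)}
    (hI : IsSymmetricIdeal K n I) {a : Fin n → ℕ} (ha : mon K n a ∈ I) (σ : Equiv.Perm (Fin n)) :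
    mon K n (a ∘ σ) ∈ I := by
  rw [← hI σ.symm, show a ∘ σ = a ∘ σ.symm.symm from rfl, ← rename_mon]
  exact Ideal.mem_map_of_mem _ ha

lemma isSymmetricIdeal_span_mon {B : Set (Fin n → ℕ)}
    (hB : ∀ b ∈ B, ∀ σ : Equiv.Perm (Fin n), b ∘ σ ∈ B) :
    IsSymmetricIdeal K n (Ideal.span (mon K n '' B)) := by
  have hle : ∀ σ : Equiv.Perm (Fin n),
      Ideal.map (rename σ) (Ideal.span (mon K n '' B)) ≤ Ideal.span (mon K n '' B) := by
    intro σ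
    rw [Ideal.map_span, Ideal.span_le]
    rintro _ ⟨_, ⟨b, hb, rfl⟩, rfl⟩
    rw [rename_mon]
    exact Ideal.subset_span ⟨_, hB b hb _, rfl⟩
  intro σ
  refine (hle σ).antisymm fun f hf => ?_
  have : f = rename σ (rename σ.symm f) := by
    simp [rename_rename]
  rw [this]
  exact Ideal.mem_map_of_mem _ (hle σ.symm (Ideal.mem_map_of_mem _ hf))

end Monomials

section PrefixSums

open Finset

variable {n : ℕ}

def prefixSum (a : Fin n → ℕ) (k : ℕ) : ℕ := ∑ t ∈ univ.filter (fun t : Fin n => (t : ℕ) < k), a t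

lemma prefixSum_congr {a b : Fin n → ℕ} {k : ℕ} (h : ∀ t : Fin n, (t : ℕ) < k → a t = b t) :
    prefixSum a k = prefixSum b k :=
  sum_congr rfl fun t ht => h t (mem_filter.mp ht).2

lemma prefixSum_le_sum_univ (a : Fin n → ℕ) (k : ℕ) : prefixSum a k ≤ ∑ t, a t :=
  sum_le_sum_of_subset (filter_subset _ _)

lemma prefixSum_lt_prefixSum {a b : Fin n → ℕ} {k : ℕ}
    (hle : ∀ t : Fin n, (t : ℕ) < k → a t ≤ b t) {i : Fin n} (hi : (i : ℕ) < k)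
    (hlt : a i < b i) : prefixSum a k < prefixSum b k :=
  sum_lt_sum (fun t ht => hle t (mem_filter.mp ht).2) ⟨i, mem_filter.mpr ⟨mem_univ _, hi⟩, hlt⟩

lemma prefixSum_card_filter (a : Fin n → ℕ) (k : ℕ) :
    prefixSum a #(univ.filter fun t : Fin n => (t : ℕ) < k) = prefixSum a k := by
  rw [Fin.card_filter_val_lt]
  refine sum_congr (filter_congr fun t _ => ?_) fun _ _ => rfl
  have := t.isLt
  omega

lemma prefixSum_succ (a : Fin n → ℕ) {k : ℕ} (hk : k < n) :
    prefixSum a (k + 1) = prefixSum a k + a ⟨k, hk⟩ := by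
  rw [prefixSum, prefixSum, add_comm (∑ _ ∈ _, _), ← sum_insert (by simp)]
  refine sum_congr ?_ fun _ _ => rfl
  ext t
  simp [Fin.ext_iff]
  omega

lemma Monotone.prefixSum_le_sum {a : Fin n → ℕ} (ha : Monotone a) (S : Finset (Fin n)) :
    prefixSum a #S ≤ ∑ t ∈ S, a t := by
  induction S using Finset.induction_on_max with
  | empty => simp [prefixSum]
  | insert m S hlt ih =>
    have hS : #S ≤ m := by
      simpa using card_le_card (fun x hx => mem_Iio.mpr (hlt x hx))
    rw [card_insert_of_notMem (fun h => lt_irrefl m (hlt m h)), sum_insert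
      (fun h => lt_irrefl m (hlt m h)), prefixSum_succ a (hS.trans_lt m.isLt), add_comm]
    exact add_le_add (ha (Fin.le_def.mpr hS)) ih

lemma borelMoveVec_add_ite {a : Fin n → ℕ} {i j : Fin n} (hij : i ≠ j) (hj : 0 < a j)
    (t : Fin n) :
    borelMoveVec n a i j t + (if t = j then 1 else 0) = a t + (if t = i then 1 else 0) := by
  unfold borelMoveVec
  split_ifs <;> subst_vars <;> omega

lemma sum_borelMoveVec_add {a : Fin n → ℕ} {i j : Fin n} (hij : i ≠ j) (hj : 0 < a j)
    (S : Finset (Fin n)) :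
    ∑ t ∈ S, borelMoveVec n a i j t + (if j ∈ S then 1 else 0) =
      ∑ t ∈ S, a t + (if i ∈ S then 1 else 0) := by
  simpa [sum_add_distrib] using sum_congr rfl fun t (_ : t ∈ S) => borelMoveVec_add_ite hij hj t

end PrefixSums

section BorelMoves

open Finset

variable {n : ℕ}

lemma Monotone.prefixSum_le_sum_borelMoveVec {a : Fin n → ℕ} (ha : Monotone a) {i j : Fin n}
    (hij : i < j) (hlt : a i < a j) (S : Finset (Fin n)) :
    prefixSum a #S ≤ ∑ t ∈ S, borelMoveVec n a i j t := by
  by_cases hjS : j ∈ S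
  · by_cases hiS : i ∈ S
    · have hsum := sum_borelMoveVec_add hij.ne ((Nat.zero_le _).trans_lt hlt) S
      rw [if_pos hjS, if_pos hiS] at hsum
      exact (ha.prefixSum_le_sum S).trans (by omega)
    · calc prefixSum a #S = prefixSum a #(S.map (Equiv.swap i j).toEmbedding) := by
            rw [card_map]
        _ ≤ ∑ t ∈ S.map (Equiv.swap i j).toEmbedding, a t := ha.prefixSum_le_sum _
        _ = ∑ t ∈ S, a (Equiv.swap i j t) := sum_map _ _ _
        _ ≤ ∑ t ∈ S, borelMoveVec n a i j t := sum_le_sum fun t ht => ?_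
      have hti : t ≠ i := fun h => hiS (h ▸ ht)
      rcases eq_or_ne t j with rfl | htj
      · simp only [borelMoveVec, Equiv.swap_apply_right, if_neg hti, ↓reduceIte]
        omega
      · simp [borelMoveVec, Equiv.swap_apply_of_ne_of_ne hti htj, hti, htj]
  · refine (ha.prefixSum_le_sum S).trans (sum_le_sum fun t ht => ?_)
    have htj : t ≠ j := fun h => hjS (h ▸ ht)
    simp only [borelMoveVec, if_neg htj]
    split_ifs <;> omega

lemma prefixSum_borelMoveVec_add {lam : Fin n → ℕ} {i j : Fin n} (hij : i ≠ j) (hj : 0 < lam j)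
    (k : ℕ) :
    prefixSum (borelMoveVec n lam i j) k + (if (j : ℕ) < k then 1 else 0) =
      prefixSum lam k + (if (i : ℕ) < k then 1 else 0) := by
  simpa [prefixSum] using sum_borelMoveVec_add hij hj (univ.filter fun t : Fin n => (t : ℕ) < k)

lemma sum_tsub_borelMoveVec_lt {lam a : Fin n → ℕ} {i j : Fin n} (hij : i ≠ j)
    (hi : lam i < a i) (hj : a j < lam j) :
    ∑ t, (borelMoveVec n lam i j t - a t) < ∑ t, (lam t - a t) := by
  refine sum_lt_sum (fun t _ => ?_) ⟨j, mem_univ _, ?_⟩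
  · simp only [borelMoveVec]
    split_ifs with hti <;> [subst hti; skip; skip] <;> omega
  · simp only [borelMoveVec, if_neg hij.symm, ↓reduceIte]
    omega

lemma monotone_borelMoveVec {lam : Fin n → ℕ} (hlam : Monotone lam) {i j : Fin n} (hij : i < j)
    (hgap : lam i + 2 ≤ lam j) (hi : ∀ t, i < t → lam i < lam t)
    (hj : ∀ t, t < j → lam t < lam j) : Monotone (borelMoveVec n lam i j) := by
  intro s t hst
  have hlst := hlam hst
  rcases eq_or_ne s i with rfl | hsi
  · rcases eq_or_ne t s with rfl | hts
    · rfl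
    have := hi t (lt_of_le_of_ne hst hts.symm)
    rcases eq_or_ne t j with rfl | htj
    · simp only [borelMoveVec, if_neg hts, ↓reduceIte]
      omega
    · simp only [borelMoveVec, if_neg hts, if_neg htj, ↓reduceIte]
      omega
  rcases eq_or_ne t j with rfl | htj
  · rcases eq_or_ne s t with rfl | hst'
    · rfl
    have := hj s (lt_of_le_of_ne hst hst')
    simp only [borelMoveVec, if_neg hsi, if_neg hst', if_neg hij.ne', ↓reduceIte]
    omega
  simp only [borelMoveVec, if_neg hsi, if_neg htj]
  split_ifs <;> omega

lemma Monotone.exists_last_eq {α β : Type*} [LinearOrder α] [Fintype α] [PartialOrder β]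
    {f : α → β} (hf : Monotone f) (i : α) :
    ∃ i', i ≤ i' ∧ f i' = f i ∧ ∀ t, i' < t → f i' < f t := by
  classical
  set T := univ.filter fun t => f t = f i
  have hT : T.Nonempty := ⟨i, by simp [T]⟩
  have hmax : f (T.max' hT) = f i := (mem_filter.mp (T.max'_mem hT)).2
  refine ⟨T.max' hT, T.le_max' i (by simp [T]), hmax, fun t ht => (hf ht.le).lt_of_ne fun h => ?_⟩
  exact (T.le_max' t (by simp [T, ← h, hmax])).not_gt ht

lemma Monotone.exists_first_eq {α β : Type*} [LinearOrder α] [Fintype α] [PartialOrder β]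
    {f : α → β} (hf : Monotone f) (j : α) :
    ∃ j', j' ≤ j ∧ f j' = f j ∧ ∀ t, t < j' → f t < f j' :=
  hf.dual.exists_last_eq (α := αᵒᵈ) j

lemma exists_deficit_before_excess {lam a : Fin n → ℕ}
    (hL : ∀ k, prefixSum lam k ≤ prefixSum a k) (hnle : ¬ lam ≤ a) :
    ∃ i j, i < j ∧ lam i < a i ∧ a j < lam j ∧ ∀ t, t < j → lam t ≤ a t := by
  obtain ⟨j, hj, hjmin⟩ := WellFounded.has_min wellFounded_lt {t | a t < lam t}
    (by simpa [Pi.le_def, Set.Nonempty] using hnle)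
  have hbefore : ∀ t, t < j → lam t ≤ a t := fun t ht => not_lt.mp fun h => hjmin t h ht
  obtain ⟨i, hij, hi⟩ : ∃ i, i < j ∧ lam i < a i := by
    by_contra! hno
    refine (hL (j + 1)).not_gt (prefixSum_lt_prefixSum (fun t ht => ?_) (Nat.lt_succ_self j) hj)
    rcases (Nat.lt_succ_iff.mp ht).lt_or_eq with ht | ht
    · exact hno t (Fin.lt_def.mpr ht)
    · exact (Fin.ext ht ▸ hj).le
  exact ⟨i, j, hij, hi, hj, hbefore⟩

end BorelMoves

section ShiftedIdeals

open Finset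

variable {K : Type} [Field K] {n : ℕ} {I : Ideal (MvPolynomial (Fin n) K)}

lemma IsSSSI.mon_mem_of_prefixSum_le (hI : IsSSSI K n I) {lam a : Fin n → ℕ}
    (hlam : Monotone lam) (hlamI : mon K n lam ∈ I) (ha : Monotone a)
    (hL : ∀ k, prefixSum lam k ≤ prefixSum a k) : mon K n a ∈ I := by
  induction hm : ∑ t, (lam t - a t) using Nat.strong_induction_on generalizing lam with
  | _ m ih =>
  by_cases hle : lam ≤ a
  · exact mon_mem_of_le hlamI hle
  obtain ⟨i, j, hij, hi, hj, hbefore⟩ := exists_deficit_before_excess hL hle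
  -- Moving a unit from the start of the block of `lam j` to the end of the block of `lam i`
  -- keeps `lam` sorted; prefix sums only grow on `(i', j']`, where they are strictly below `a`'s.
  obtain ⟨i', hii', hi'i, hi'last⟩ := hlam.exists_last_eq i
  obtain ⟨j', hj'j, hj'j_eq, hj'first⟩ := hlam.exists_first_eq j
  have hai := ha hii'
  have haj := ha hj'j
  have haij := ha hij.le
  have hi'j' : i' < j' := lt_of_not_ge fun h => by have := hlam h; omega
  refine ih _ (hm ▸ sum_tsub_borelMoveVec_lt hi'j'.ne (by omega) (by omega))
    (monotone_borelMoveVec hlam hi'j' (by omega) hi'last hj'first)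
    (hI.2.2 lam hlam hlamI i' j' hi'j' (by omega)) (fun k => ?_) rfl
  have hsum := prefixSum_borelMoveVec_add hi'j'.ne (lam := lam) (by omega) k
  have := hL k
  have := Fin.lt_def.mp hi'j'
  by_cases hj'k : (j' : ℕ) < k
  · rw [if_pos hj'k, if_pos (by omega)] at hsum
    omega
  by_cases hi'k : (i' : ℕ) < k
  · have := prefixSum_lt_prefixSum (k := k) (fun t ht => hbefore t ?_) (by omega) hi
    · rw [if_neg hj'k, if_pos hi'k] at hsum
      omega
    · exact Fin.lt_def.mpr (by omega)
  · rw [if_neg hj'k, if_neg hi'k] at hsum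
    omega

lemma IsSSSI.mon_mem_of_prefixSum_le_sum (hI : IsSSSI K n I) {lam a : Fin n → ℕ}
    (hlam : Monotone lam) (hlamI : mon K n lam ∈ I)
    (h : ∀ S : Finset (Fin n), prefixSum lam #S ≤ ∑ t ∈ S, a t) : mon K n a ∈ I := by
  set τ := Tuple.sort a
  have hsorted : mon K n (a ∘ τ) ∈ I :=
    hI.mon_mem_of_prefixSum_le hlam hlamI (Tuple.monotone_sort a) fun k => by
      rw [← prefixSum_card_filter lam k, ← card_map τ.toEmbedding]
      exact (h _).trans_eq (sum_map _ _ _)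
  simpa [Function.comp_assoc] using hI.2.1.mon_comp_mem hsorted τ.symm

end ShiftedIdeals

section Veronese

open Finset

variable {K : Type} [Field K] {n c : ℕ}

lemma one_le_sum_of_squarefree {b : Fin n → ℕ} (hb1 : ∀ t, b t ≤ 1) (hb : ∑ t, b t = n - c + 1)
    {S : Finset (Fin n)} (hS : c ≤ #S) : 1 ≤ ∑ t ∈ S, b t := by
  have hSc : ∑ t ∈ Sᶜ, b t ≤ #Sᶜ := (sum_le_sum fun t _ => hb1 t).trans_eq (by simp)
  have := sum_add_sum_compl S b
  rw [card_compl, Fintype.card_fin] at hSc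
  omega

lemma vero_pow_le (N : ℕ) :
    vero K n c ^ N ≤
      Ideal.span (mon K n '' {b | ∀ S : Finset (Fin n), c ≤ #S → N ≤ ∑ t ∈ S, b t}) := by
  induction N with
  | zero =>
    rw [pow_zero, Ideal.one_eq_top, top_le_iff, Ideal.eq_top_iff_one, ← mon_zero]
    exact Ideal.subset_span ⟨0, fun _ _ => Nat.zero_le _, rfl⟩
  | succ N ih =>
    rw [pow_succ]
    refine (Ideal.mul_mono ih le_rfl).trans ?_
    rw [vero, Ideal.span_mul_span', Ideal.span_le]
    rintro _ ⟨_, ⟨b, hb, rfl⟩, _, ⟨q, ⟨hq1, hq⟩, rfl⟩, rfl⟩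
    refine Ideal.subset_span ⟨b + q, fun S hS => ?_, mon_add b q⟩
    rw [Pi.add_def, sum_add_distrib]
    exact add_le_add (hb S hS) (one_le_sum_of_squarefree hq1 hq hS)

def tailIndicator (n c : ℕ) : Fin n → ℕ := fun i => if c - 1 ≤ (i : ℕ) then 1 else 0

lemma monotone_tailIndicator : Monotone (tailIndicator n c) := by
  intro s t hst
  simp only [tailIndicator]
  have : (s : ℕ) ≤ t := hst
  split_ifs <;> omega

lemma mon_tailIndicator_comp_mem_vero (hc1 : 1 ≤ c) (hc2 : c ≤ n) (σ : Equiv.Perm (Fin n)) :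
    mon K n (tailIndicator n c ∘ σ) ∈ vero K n c := by
  refine Ideal.subset_span ⟨_, ⟨fun t => ?_, ?_⟩, rfl⟩
  · simp only [Function.comp_apply, tailIndicator]
    split_ifs <;> omega
  · have hcard := card_filter_add_card_filter_not (s := univ) fun t : Fin n => (t : ℕ) < c - 1
    simp only [Fin.card_filter_val_lt, not_lt, card_univ, Fintype.card_fin] at hcard
    rw [Function.comp_def, Equiv.sum_comp σ (tailIndicator n c)]
    simp only [tailIndicator, sum_boole, Nat.cast_id]
    omega

end Veronese

lemma mem_iSup_colon_pow_iff {R : Type*} [CommRing R] {I J : Ideal R} {f : R} :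
    f ∈ (⨆ k : ℕ, Submodule.colon I ((J ^ k : Ideal R) : Set R)) ↔
      ∃ N, f ∈ Submodule.colon I ((J ^ N : Ideal R) : Set R) :=
  Submodule.mem_iSup_of_directed _ <| Monotone.directed_le fun _ _ hkl =>
    Submodule.colon_mono le_rfl (Ideal.pow_le_pow_right hkl)

section Saturation

open Finset

variable {K : Type} [Field K] {n c : ℕ} {I : Ideal (MvPolynomial (Fin n) K)}

def saturationExponents (K : Type) [Field K] (n c : ℕ) (I : Ideal (MvPolynomial (Fin n) K)) :
    Set (Fin n → ℕ) :=
  {b | ∃ σ : Equiv.Perm (Fin n), Monotone (b ∘ σ) ∧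
    ∃ lam : Fin n → ℕ, Monotone lam ∧ mon K n lam ∈ I ∧
      ∀ i : Fin n, (i : ℕ) < c - 1 → b (σ i) = lam i}

lemma mon_image_saturationExponents :
    mon K n '' saturationExponents K n c I =
      {f | ∃ (σ : Equiv.Perm (Fin n)) (μ : Fin n → ℕ), Monotone μ ∧
        (∃ lam : Fin n → ℕ, Monotone lam ∧ mon K n lam ∈ I ∧
          ∀ i : Fin n, (i : ℕ) < c - 1 → μ i = lam i) ∧
        f = rename (σ : Fin n → Fin n) (mon K n μ)} := by
  ext f
  constructor
  · rintro ⟨b, ⟨σ, hb, hlam⟩, rfl⟩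
    refine ⟨σ, b ∘ σ, hb, hlam, ?_⟩
    rw [rename_mon, Function.comp_assoc, σ.self_comp_symm, Function.comp_id]
  · rintro ⟨σ, μ, hμ, hlam, rfl⟩
    refine ⟨μ ∘ σ.symm, ⟨σ, ?_, ?_⟩, (rename_mon σ μ).symm⟩ <;>
      simpa [Function.comp_assoc] using ‹_›

lemma comp_mem_saturationExponents {b : Fin n → ℕ} (hb : b ∈ saturationExponents K n c I)
    (π : Equiv.Perm (Fin n)) : b ∘ π ∈ saturationExponents K n c I := by
  obtain ⟨σ, hσ, hlam⟩ := hb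
  refine ⟨σ.trans π.symm, ?_, ?_⟩ <;> simpa [Function.comp_def] using ‹_›

lemma IsSSSI.mon_mem_colon_vero_pow (hI : IsSSSI K n I) {lam a : Fin n → ℕ}
    (hlam : Monotone lam) (hlamI : mon K n lam ∈ I)
    (h : ∀ S : Finset (Fin n), #S < c → prefixSum lam #S ≤ ∑ t ∈ S, a t) :
    mon K n a ∈ Submodule.colon I
      ((vero K n c ^ ∑ t, lam t : Ideal (MvPolynomial (Fin n) K)) :
        Set (MvPolynomial (Fin n) K)) := by
  refine Submodule.colon_mono le_rfl (vero_pow_le _) ?_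
  rw [Ideal.colon_span, Submodule.mem_colon]
  rintro _ ⟨b, hb, rfl⟩
  rw [smul_eq_mul, ← mon_add]
  refine hI.mon_mem_of_prefixSum_le_sum hlam hlamI fun S => ?_
  by_cases hS : c ≤ #S
  · exact (prefixSum_le_sum_univ lam _).trans
      ((hb S hS).trans (sum_le_sum fun t _ => Nat.le_add_left _ _))
  · exact (h S (not_le.mp hS)).trans (sum_le_sum fun t _ => Nat.le_add_right _ _)

lemma nsmul_tailIndicator_comp_mem_vero_pow (hc1 : 1 ≤ c) (hc2 : c ≤ n) (N : ℕ)
    (σ : Equiv.Perm (Fin n)) :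
    mon K n (N • (tailIndicator n c ∘ σ)) ∈ vero K n c ^ N := by
  rw [mon_nsmul]
  exact Ideal.pow_mem_pow (mon_tailIndicator_comp_mem_vero hc1 hc2 σ) N

lemma IsSSSI.span_le_iSup_colon (hI : IsSSSI K n I) :
    Ideal.span (mon K n '' saturationExponents K n c I) ≤
      ⨆ k : ℕ, Submodule.colon I
        ((vero K n c ^ k : Ideal (MvPolynomial (Fin n) K)) : Set (MvPolynomial (Fin n) K)) := by
  rw [Ideal.span_le]
  rintro _ ⟨b, ⟨σ, hb, lam, hlam, hlamI, hagree⟩, rfl⟩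
  refine Submodule.mem_iSup_of_mem _ (hI.mon_mem_colon_vero_pow hlam hlamI fun S hS => ?_)
  calc prefixSum lam #S = prefixSum (b ∘ σ) #S :=
        prefixSum_congr fun t ht => (hagree t (by omega)).symm
    _ = prefixSum (b ∘ σ) #(S.map σ.symm.toEmbedding) := by rw [card_map]
    _ ≤ ∑ t ∈ S.map σ.symm.toEmbedding, (b ∘ σ) t := hb.prefixSum_le_sum _
    _ = ∑ t ∈ S, b t := by simp [sum_map]

lemma IsSSSI.iSup_colon_le_span (hI : IsSSSI K n I) (hc1 : 1 ≤ c) (hc2 : c ≤ n) :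
    (⨆ k : ℕ, Submodule.colon I
        ((vero K n c ^ k : Ideal (MvPolynomial (Fin n) K)) : Set (MvPolynomial (Fin n) K))) ≤
      Ideal.span (mon K n '' saturationExponents K n c I) := by
  intro f hf
  obtain ⟨N, hN⟩ := mem_iSup_colon_pow_iff.mp hf
  refine mem_span_mon_iff.mpr fun d hd => ⟨d, ?_, le_rfl⟩
  set τ := Tuple.sort ⇑d
  have hdI := hI.1.mon_add_mem_of_mem_support (Submodule.mem_colon.mp hN _
    (nsmul_tailIndicator_comp_mem_vero_pow hc1 hc2 N τ.symm)) hd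
  refine ⟨τ, Tuple.monotone_sort _, ⇑d ∘ τ + N • tailIndicator n c,
    (Tuple.monotone_sort _).add (monotone_tailIndicator.const_smul (Nat.zero_le N)), ?_,
    fun i hi => ?_⟩
  · convert hI.2.1.mon_comp_mem hdI τ using 2
    ext t
    simp
  · simp [tailIndicator, not_le.mpr hi]

lemma IsSSSI.borelMoveVec_mem_iSup_colon (hI : IsSSSI K n I) (hc1 : 1 ≤ c) (hc2 : c ≤ n)
    {ν : Fin n → ℕ} (hν : Monotone ν)
    (hνsat : mon K n ν ∈ ⨆ k : ℕ, Submodule.colon I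
        ((vero K n c ^ k : Ideal (MvPolynomial (Fin n) K)) : Set (MvPolynomial (Fin n) K)))
    {i j : Fin n} (hij : i < j) (hlt : ν i < ν j) :
    mon K n (borelMoveVec n ν i j) ∈ ⨆ k : ℕ, Submodule.colon I
        ((vero K n c ^ k : Ideal (MvPolynomial (Fin n) K)) : Set (MvPolynomial (Fin n) K)) := by
  obtain ⟨N, hN⟩ := mem_iSup_colon_pow_iff.mp hνsat
  have hlamI : mon K n (ν + N • tailIndicator n c) ∈ I := by
    rw [mon_add]
    exact Submodule.mem_colon.mp hN _ (nsmul_tailIndicator_comp_mem_vero_pow hc1 hc2 N 1)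
  refine Submodule.mem_iSup_of_mem _ (hI.mon_mem_colon_vero_pow
    (hν.add (monotone_tailIndicator.const_smul (Nat.zero_le N))) hlamI fun S hS => ?_)
  rw [prefixSum_congr fun t ht => ?_]
  · exact hν.prefixSum_le_sum_borelMoveVec hij hlt S
  · simp [tailIndicator]
    omega

end Saturation

/-- Let `I` be a symmetric strongly shifted ideal and `1 ≤ c ≤ n`. The
saturation `I : I_{n,c}^∞ = ∪_k (I : I_{n,c}^k)` equals the ideal generated by
all `σ(x^μ)` with `σ ∈ 𝔖_n` and `μ ∈ P_n` whose first `c − 1` entries agree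
with those of some `λ ∈ P(I)`; moreover this saturation is symmetric strongly
shifted. -/
theorem saturation_of_sssi (K : Type) [Field K] (n : ℕ)
    (I : Ideal (MvPolynomial (Fin n) K)) (hI : IsSSSI K n I)
    (c : ℕ) (hc1 : 1 ≤ c) (hc2 : c ≤ n) :
    (⨆ k : ℕ, Submodule.colon I (((vero K n c) ^ k : Ideal (MvPolynomial (Fin n) K)) : Set (MvPolynomial (Fin n) K))) =
      Ideal.span {f | ∃ (σ : Equiv.Perm (Fin n)) (μ : Fin n → ℕ), Monotone μ ∧
        (∃ lam : Fin n → ℕ, Monotone lam ∧ mon K n lam ∈ I ∧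
          ∀ i : Fin n, (i : ℕ) < c - 1 → μ i = lam i) ∧
        f = rename (σ : Fin n → Fin n) (mon K n μ)} ∧
    IsSSSI K n (⨆ k : ℕ, Submodule.colon I (((vero K n c) ^ k : Ideal (MvPolynomial (Fin n) K)) : Set (MvPolynomial (Fin n) K))) := by
  have heq : (⨆ k : ℕ, Submodule.colon I
      (((vero K n c) ^ k : Ideal (MvPolynomial (Fin n) K)) : Set (MvPolynomial (Fin n) K))) =
        Ideal.span (mon K n '' saturationExponents K n c I) :=
    (hI.iSup_colon_le_span hc1 hc2).antisymm hI.span_le_iSup_colon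
  refine ⟨heq.trans (congrArg Ideal.span mon_image_saturationExponents), ⟨_, heq⟩, ?_,
    fun ν hν hνsat i j hij hlt => hI.borelMoveVec_mem_iSup_colon hc1 hc2 hν hνsat hij hlt⟩
  rw [heq]
  exact isSymmetricIdeal_span_mon fun b hb σ => comp_mem_saturationExponents hb σ
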